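/- arXiv:1110.3760 — 2 statements merged into one kernel-verified Lean document; each statement's English description precedes it below -/
import Mathlib

section
/- Fix ε > 0. There is a constant C = C(ε) > 0 such that for any 2n-vertex d-regular bipartite graph G, the sequence {i_t(G)}_{t≥0} is s-step monotone increasing on [0, (1−ε)n/2] and s-step monotone decreasing on [(1+ε)n/2, n], where s = C·max{log n, n/d}. -/
open Finset

/-- Number of independent sets of size `t` in `G`. -/
def numIndep {V : Type*} [Fintype V] [DecidableEq V] (G : SimpleGraph V)
    [DecidableRel G.Adj] (t : ℕ) : ℕ :=
  (Finset.univ.powerset.filter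
    (fun s : Finset V => s.card = t ∧ ∀ u ∈ s, ∀ v ∈ s, ¬ G.Adj u v)).card

/-!
Let `A` and `Aᶜ` be the two sides, of size `n` each, and put `λ = t / (n - t)`. Every subset of `A`
is independent, so `i_t ≥ C(n, t)`. Conversely, writing the independence polynomial as
`(1 + λ)^n` times the expectation of a product over `v ∈ Aᶜ` for a `λ/(1+λ)`-random subset of `A`,
Finner's generalised Hölder inequality gives Kahn's bound `Σ_I λ^|I| ≤ (1 + λ)^n 2^(n/d)`, hence
`i_k λ^k ≤ (1 + λ)^n 2^(n/d)` for every `k`. The binomial term `C(n, k) λ^k` is largest at `k = t`,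
so `(1 + λ)^n ≤ (n + 1) C(n, t) λ^t` and therefore `i_k λ^k ≤ (n + 1) 2^(n/d) i_t λ^t`.
With `ρ = (1 + ε)/(1 - ε)`, below `(1 - ε)n/2` one has `λ ≤ 1/ρ` and above `(1 + ε)n/2` one has
`λ ≥ ρ`, and once `j - i ≥ C max(log n, n/d)` the factor `ρ^(j-i)` beats `(n + 1) 2^(n/d)`.
-/

open scoped NNReal

theorem NNReal.prod_rpow_inv_le_of_card_le {κ : Type*} {d : ℕ} (hd : 0 < d) {m : Finset κ}
    (hm : #m ≤ d) (z : κ → ℝ≥0) :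
    ∏ k ∈ m, z k ^ (d⁻¹ : ℝ) ≤ (1 - #m / d) + ∑ k ∈ m, z k / d := by
  have hc : (#m : ℝ≥0) / d ≤ 1 := div_le_one_of_le₀ (by exact_mod_cast hm) (by positivity)
  -- weighted AM-GM on `m` padded by one point of value `1` and weight `1 - #m / d`
  have := NNReal.geom_mean_le_arith_mean_weighted m.insertNone
    (fun o => o.elim (1 - #m / d) fun _ => (d : ℝ≥0)⁻¹) (fun o => o.elim 1 z) (by
      simp only [sum_insertNone, Option.elim, sum_const, nsmul_eq_mul, ← div_eq_mul_inv]
      exact tsub_add_cancel_of_le hc)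
  simpa [prod_insertNone, sum_insertNone, div_eq_inv_mul] using this

theorem NNReal.sum_mul_prod_le_prod_rpow {ι κ : Type*} {s : Finset ι} {w : ι → ℝ≥0}
    (hw : ∑ j ∈ s, w j = 1) {d : ℕ} (hd : 0 < d) {m : Finset κ} (hm : #m ≤ d)
    (f : κ → ι → ℝ≥0) :
    ∑ j ∈ s, w j * ∏ k ∈ m, f k j ≤ ∏ k ∈ m, (∑ j ∈ s, w j * f k j ^ d) ^ (d⁻¹ : ℝ) := by
  classical
  set N : κ → ℝ≥0 := fun k => (∑ j ∈ s, w j * f k j ^ d) ^ (d⁻¹ : ℝ)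
  have hNd : ∀ k, N k ^ d = ∑ j ∈ s, w j * f k j ^ d := fun k =>
    NNReal.rpow_inv_natCast_pow _ hd.ne'
  by_cases hzero : ∃ k ∈ m, N k = 0
  · obtain ⟨k, hk, hNk⟩ := hzero
    have hwf : ∀ j ∈ s, w j * f k j = 0 := by
      intro j hj
      have := (sum_eq_zero_iff.1 (by rw [← hNd, hNk, zero_pow hd.ne'])) j hj
      simpa [hd.ne'] using this
    refine (sum_eq_zero fun j hj => ?_).trans_le zero_le
    rw [← mul_prod_erase m _ hk, ← mul_assoc, hwf j hj, zero_mul]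
  push Not at hzero
  -- normalise every `f k` to unit `L^d`-norm and apply AM-GM pointwise
  set g : κ → ι → ℝ≥0 := fun k j => f k j / N k
  have hg : ∀ k ∈ m, ∑ j ∈ s, w j * g k j ^ d = 1 := by
    intro k hk
    simp only [g, div_pow, ← mul_div_assoc, ← sum_div, ← hNd]
    exact div_self (pow_ne_zero _ (hzero k hk))
  have hpoint : ∀ j, ∏ k ∈ m, g k j ≤ (1 - #m / d) + ∑ k ∈ m, g k j ^ d / d := fun j => by
    simpa only [NNReal.pow_rpow_inv_natCast _ hd.ne'] using
      NNReal.prod_rpow_inv_le_of_card_le hd hm fun k => g k j ^ d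
  have hc : (#m : ℝ≥0) / d ≤ 1 := div_le_one_of_le₀ (by exact_mod_cast hm) (by positivity)
  calc ∑ j ∈ s, w j * ∏ k ∈ m, f k j
      = (∑ j ∈ s, w j * ∏ k ∈ m, g k j) * ∏ k ∈ m, N k := by
        rw [sum_mul]
        refine sum_congr rfl fun j _ => ?_
        rw [mul_assoc, ← prod_mul_distrib]
        exact congrArg _ (prod_congr rfl fun k hk => (div_mul_cancel₀ _ (hzero k hk)).symm)
    _ ≤ (∑ j ∈ s, w j * ((1 - #m / d) + ∑ k ∈ m, g k j ^ d / d)) * ∏ k ∈ m, N k := by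
        gcongr with j
        exact hpoint j
    _ = ((1 - #m / d) + #m / d) * ∏ k ∈ m, N k := by
        congr 1
        simp only [mul_add, sum_add_distrib, ← sum_mul, hw, one_mul, mul_sum]
        rw [sum_comm]
        simp only [mul_div_assoc', ← sum_div]
        rw [sum_congr rfl fun k hk => by rw [hg k hk], sum_const, nsmul_one]
    _ = ∏ k ∈ m, N k := by rw [tsub_add_cancel_of_le hc, one_mul]

theorem NNReal.mul_prod_add_mul_prod_le {κ : Type*} {w₀ w₁ : ℝ≥0}
    (hw : w₀ + w₁ = 1) {d : ℕ} (hd : 0 < d) (K : Finset κ) (x y : κ → ℝ≥0)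
    (hK : #{k ∈ K | x k ≠ y k} ≤ d) :
    w₀ * ∏ k ∈ K, x k + w₁ * ∏ k ∈ K, y k ≤
      ∏ k ∈ K, (w₀ * x k ^ d + w₁ * y k ^ d) ^ (d⁻¹ : ℝ) := by
  have hsame : ∀ k ∈ {k ∈ K | ¬ x k ≠ y k},
      (w₀ * x k ^ d + w₁ * y k ^ d) ^ (d⁻¹ : ℝ) = x k := by
    intro k hk
    rw [not_not.1 (mem_filter.1 hk).2, ← add_mul, hw, one_mul,
      NNReal.pow_rpow_inv_natCast _ hd.ne']
  have hy : ∏ k ∈ {k ∈ K | ¬ x k ≠ y k}, y k = ∏ k ∈ {k ∈ K | ¬ x k ≠ y k}, x k :=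
    prod_congr rfl fun k hk => (not_not.1 (mem_filter.1 hk).2).symm
  have holder := NNReal.sum_mul_prod_le_prod_rpow (s := univ)
    (w := fun b => bif b then w₀ else w₁) (by simpa using hw) hd hK
    fun k b => bif b then x k else y k
  simp only [Fintype.sum_bool, cond_true, cond_false] at holder
  rw [← prod_filter_mul_prod_filter_not K (fun k => x k ≠ y k),
    ← prod_filter_mul_prod_filter_not K (fun k => x k ≠ y k), hy,
    ← prod_filter_mul_prod_filter_not K (fun k => x k ≠ y k), prod_congr rfl hsame,
    ← mul_assoc, ← mul_assoc, ← add_mul]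
  gcongr

theorem Nat.choose_mul_pow_mul_pow_le {n t : ℕ} (ht : t < n) (k : ℕ) :
    n.choose k * t ^ k * (n - t) ^ (n - k) ≤ n.choose t * t ^ t * (n - t) ^ (n - t) := by
  set b : ℕ → ℕ := fun k => n.choose k * t ^ k * (n - t) ^ (n - k)
  have hratio : ∀ k < n, b (k + 1) * ((k + 1) * (n - t)) = b k * ((n - k) * t) := by
    intro k hk
    have hpow : (n - t) ^ (n - (k + 1)) * (n - t) = (n - t) ^ (n - k) := by
      rw [← pow_succ]; congr 1; omega
    calc b (k + 1) * ((k + 1) * (n - t))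
        = n.choose (k + 1) * (k + 1) * t ^ (k + 1) * ((n - t) ^ (n - (k + 1)) * (n - t)) := by
          simp only [b]; ring
      _ = b k * ((n - k) * t) := by rw [choose_succ_right_eq, hpow]; simp only [b]; ring
  have hpos : ∀ k, 0 < (k + 1) * (n - t) := fun k =>
    Nat.mul_pos k.succ_pos (Nat.sub_pos_of_lt ht)
  have hup : ∀ k < t, b k ≤ b (k + 1) := by
    intro k hk
    refine Nat.le_of_mul_le_mul_right ?_ (hpos k)
    rw [hratio k (hk.trans ht), mul_comm (n - k)]
    exact Nat.mul_le_mul_left _ (Nat.mul_le_mul (by omega) (by omega))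
  have hdown : ∀ k ≥ t, b (k + 1) ≤ b k := by
    intro k hk
    rcases lt_or_ge k n with hkn | hkn
    · refine Nat.le_of_mul_le_mul_right ?_ (hpos k)
      rw [hratio k hkn, mul_comm (k + 1)]
      exact Nat.mul_le_mul_left _ (Nat.mul_le_mul (by omega) (by omega))
    · simp [b, choose_eq_zero_of_lt (show n < k + 1 by omega)]
  rcases le_total k t with hk | hk
  · exact Nat.decreasingInduction (motive := fun j _ => b j ≤ b t)
      (fun j hj ih => (hup j hj).trans ih) le_rfl hk
  · exact Nat.le_induction (P := fun j _ => b j ≤ b t) le_rfl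
      (fun j hj ih => (hdown j hj).trans ih) k hk

theorem Nat.pow_le_succ_mul_choose_mul_pow_mul_pow {n t : ℕ} (ht : t < n) :
    n ^ n ≤ (n + 1) * (n.choose t * t ^ t * (n - t) ^ (n - t)) := by
  have hsum := add_pow t (n - t) n
  rw [Nat.add_sub_cancel' ht.le] at hsum
  calc n ^ n = ∑ k ∈ range (n + 1), t ^ k * (n - t) ^ (n - k) * n.choose k := hsum
    _ ≤ ∑ _k ∈ range (n + 1), n.choose t * t ^ t * (n - t) ^ (n - t) :=
        sum_le_sum fun k _ => (le_of_eq (by ring)).trans (choose_mul_pow_mul_pow_le ht k)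
    _ = _ := by rw [sum_const, card_range, smul_eq_mul]

theorem one_add_div_sub_pow_le {n t : ℕ} (ht : t < n) :
    (1 + t / (n - t) : ℝ) ^ n ≤ (n + 1) * n.choose t * (t / (n - t) : ℝ) ^ t := by
  have hnt : (0 : ℝ) < n - t := sub_pos.2 (by exact_mod_cast ht)
  have key : (n : ℝ) ^ n ≤ (n + 1) * n.choose t * t ^ t * (n - t) ^ (n - t) := by
    have := Nat.pow_le_succ_mul_choose_mul_pow_mul_pow ht
    rw [← Nat.cast_le (α := ℝ)] at this
    push_cast [Nat.cast_sub ht.le] at this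
    linarith
  have hsplit : ((n : ℝ) - t) ^ n = (n - t) ^ t * (n - t) ^ (n - t) := by
    rw [← pow_add, Nat.add_sub_cancel' ht.le]
  rw [one_add_div hnt.ne', sub_add_cancel, div_pow, div_pow, div_le_iff₀ (by positivity), hsplit]
  calc (n : ℝ) ^ n ≤ (n + 1) * n.choose t * t ^ t * (n - t) ^ (n - t) := key
    _ = _ := by field_simp

theorem succ_mul_two_rpow_le_pow {ρ : ℝ} (hρ : 1 < ρ) {n d s : ℕ} (hd : 0 < d) (hdn : d ≤ n)
    (hs : 3 / Real.logb 2 ρ * max (Real.logb 2 n) ((n : ℝ) / d) ≤ s) :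
    ((n : ℝ) + 1) * 2 ^ ((n : ℝ) / d) ≤ ρ ^ s := by
  set M := max (Real.logb 2 n) ((n : ℝ) / d)
  have hc : 0 < Real.logb 2 ρ := Real.logb_pos one_lt_two hρ
  have hn : (1 : ℝ) ≤ n := by exact_mod_cast hd.trans_le hdn
  have hM : 1 ≤ M :=
    (le_max_right _ _).trans' <| (one_le_div₀ (by positivity)).2 (by exact_mod_cast hdn)
  have hlog : Real.logb 2 (n + 1) ≤ 1 + Real.logb 2 n := by
    calc Real.logb 2 (n + 1) ≤ Real.logb 2 (2 * n) :=
          Real.logb_le_logb_of_le one_lt_two (by positivity) (by linarith)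
      _ = 1 + Real.logb 2 n := by
          rw [Real.logb_mul two_ne_zero (by positivity), Real.logb_self_eq_one one_lt_two]
  have h3M : 3 * M ≤ s * Real.logb 2 ρ := by
    rwa [div_mul_eq_mul_div, div_le_iff₀ hc] at hs
  calc ((n : ℝ) + 1) * 2 ^ ((n : ℝ) / d)
      = 2 ^ (Real.logb 2 (n + 1) + n / d) := by
        rw [Real.rpow_add two_pos, Real.rpow_logb two_pos one_lt_two.ne' (by positivity)]
    _ ≤ 2 ^ (s * Real.logb 2 ρ) := by
        gcongr
        · exact one_le_two
        · linarith [le_max_left (Real.logb 2 n) (n / d),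
            le_max_right (Real.logb 2 n) ((n : ℝ) / d)]
    _ = ρ ^ s := by
        rw [mul_comm, Real.rpow_mul zero_le_two,
          Real.rpow_logb two_pos one_lt_two.ne' (by linarith), Real.rpow_natCast]

section SubsetExpect

variable {ι : Type*} [DecidableEq ι]

/-- Expectation of `f` over the random subset of `u` containing each `i ∈ u` independently with
probability `w₁ i` (and omitting it with probability `w₀ i`). -/
noncomputable def subsetExpect (w₀ w₁ : ι → ℝ≥0) (u : Finset ι) (f : Finset ι → ℝ≥0) : ℝ≥0 :=
  ∑ S ∈ u.powerset, ((∏ i ∈ S, w₁ i) * ∏ i ∈ u \ S, w₀ i) * f S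

variable {w₀ w₁ : ι → ℝ≥0} {u : Finset ι} {f g : Finset ι → ℝ≥0}

@[simp]
lemma subsetExpect_empty (f : Finset ι → ℝ≥0) : subsetExpect w₀ w₁ ∅ f = f ∅ := by
  simp [subsetExpect]

lemma subsetExpect_insert {a : ι} (ha : a ∉ u) (f : Finset ι → ℝ≥0) :
    subsetExpect w₀ w₁ (insert a u) f =
      subsetExpect w₀ w₁ u fun S => w₀ a * f S + w₁ a * f (insert a S) := by
  rw [subsetExpect, sum_powerset_insert ha, ← sum_add_distrib, subsetExpect]
  refine sum_congr rfl fun S hS => ?_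
  have haS : a ∉ S := fun h => ha (mem_powerset.1 hS h)
  rw [insert_sdiff_of_notMem _ haS, insert_sdiff_insert, sdiff_insert_of_notMem ha,
    prod_insert haS, prod_insert fun h => ha (mem_sdiff.1 h).1]
  ring

lemma subsetExpect_congr (h : ∀ S ⊆ u, f S = g S) :
    subsetExpect w₀ w₁ u f = subsetExpect w₀ w₁ u g :=
  sum_congr rfl fun S hS => by rw [h S (mem_powerset.1 hS)]

lemma subsetExpect_mono (h : ∀ S ⊆ u, f S ≤ g S) :
    subsetExpect w₀ w₁ u f ≤ subsetExpect w₀ w₁ u g :=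
  sum_le_sum fun S hS => by gcongr; exact h S (mem_powerset.1 hS)

lemma subsetExpect_add :
    subsetExpect w₀ w₁ u (f + g) = subsetExpect w₀ w₁ u f + subsetExpect w₀ w₁ u g := by
  simp only [subsetExpect, Pi.add_apply, mul_add, sum_add_distrib]

lemma subsetExpect_const_mul (c : ℝ≥0) :
    subsetExpect w₀ w₁ u (fun S => c * f S) = c * subsetExpect w₀ w₁ u f := by
  simp only [subsetExpect, mul_sum, mul_left_comm c]

lemma subsetExpect_const (hw : ∀ i, w₀ i + w₁ i = 1) (u : Finset ι) (c : ℝ≥0) :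
    subsetExpect w₀ w₁ u (fun _ => c) = c := by
  induction u using Finset.induction_on with
  | empty => simp
  | insert a u ha ih => simp only [subsetExpect_insert ha, ← add_mul, hw, one_mul, ih]

lemma subsetExpect_indicator_disjoint (hw : ∀ i, w₀ i + w₁ i = 1) {T : Finset ι}
    (hT : T ⊆ u) :
    subsetExpect w₀ w₁ u (fun S => if Disjoint S T then 1 else 0) = ∏ i ∈ T, w₀ i := by
  induction u using Finset.induction_on generalizing T with
  | empty => simp [subset_empty.1 hT]
  | insert a u ha ih =>
    rw [subsetExpect_insert ha]
    by_cases haT : a ∈ T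
    · have hTa : T.erase a ⊆ u := fun i hi => by
        obtain ⟨hia, hiT⟩ := mem_erase.1 hi
        exact (mem_insert.1 (hT hiT)).resolve_left hia
      rw [subsetExpect_congr (g := fun S => w₀ a * if Disjoint S (T.erase a) then 1 else 0)
        fun S hS => ?_, subsetExpect_const_mul, ih hTa, mul_prod_erase T w₀ haT]
      have haS : a ∉ S := fun h => ha (hS h)
      have hins : ¬ Disjoint (insert a S) T := fun h =>
        disjoint_left.1 h (mem_insert_self a S) haT
      simp only [hins, if_false, mul_zero, add_zero, ← disjoint_erase_comm,
        erase_eq_of_notMem haS]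
    · rw [← ih ((subset_insert_iff_of_notMem haT).1 hT)]
      refine subsetExpect_congr fun S _ => ?_
      simp only [disjoint_insert_left, haT, not_false_eq_true, true_and, ← add_mul, hw, one_mul]

theorem subsetExpect_prod_le_prod_rpow {κ : Type*} (hw : ∀ i, w₀ i + w₁ i = 1) {d : ℕ}
    (hd : 0 < d) (u : Finset ι) (K : Finset κ) (F : κ → Finset ι → ℝ≥0) (D : κ → Finset ι)
    (hF : ∀ k ∈ K, ∀ S ⊆ u, ∀ T ⊆ u, S ∩ D k = T ∩ D k → F k S = F k T)
    (hcov : ∀ i ∈ u, #{k ∈ K | i ∈ D k} ≤ d) :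
    subsetExpect w₀ w₁ u (fun S => ∏ k ∈ K, F k S) ≤
      ∏ k ∈ K, subsetExpect w₀ w₁ u (fun S => F k S ^ d) ^ (d⁻¹ : ℝ) := by
  induction u using Finset.induction_on generalizing F D with
  | empty => simp [NNReal.pow_rpow_inv_natCast _ hd.ne']
  | insert a u ha ih =>
    have hsub : u ⊆ insert a u := subset_insert a u
    -- integrate out the coordinate `a`: each `F k` becomes an `L^d`-mean over `a ∈ S`
    set F' : κ → Finset ι → ℝ≥0 := fun k S =>
      (w₀ a * F k S ^ d + w₁ a * F k (insert a S) ^ d) ^ (d⁻¹ : ℝ)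
    have hstep : ∀ S ⊆ u, w₀ a * ∏ k ∈ K, F k S + w₁ a * ∏ k ∈ K, F k (insert a S) ≤
        ∏ k ∈ K, F' k S := by
      intro S hS
      refine NNReal.mul_prod_add_mul_prod_le (hw a) hd K _ _
        ((card_le_card fun k hk => ?_).trans (hcov a (mem_insert_self a u)))
      obtain ⟨hkK, hk⟩ := mem_filter.1 hk
      refine mem_filter.2 ⟨hkK, by_contra fun haD => hk ?_⟩
      exact hF k hkK S (hS.trans hsub) (insert a S) (insert_subset_insert a hS)
        (insert_inter_of_notMem haD).symm
    have hF' : ∀ k ∈ K, ∀ S ⊆ u, ∀ T ⊆ u,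
        S ∩ (D k).erase a = T ∩ (D k).erase a → F' k S = F' k T := by
      intro k hk S hS T hT hST
      have haS : a ∉ S := fun h => ha (hS h)
      have haT : a ∉ T := fun h => ha (hT h)
      have h₀ : S ∩ D k = T ∩ D k := by
        rwa [inter_erase, inter_erase, erase_eq_of_notMem (fun h => haS (mem_inter.1 h).1),
          erase_eq_of_notMem (fun h => haT (mem_inter.1 h).1)] at hST
      have h₁ : insert a S ∩ D k = insert a T ∩ D k := by
        by_cases haD : a ∈ D k
        · rw [insert_inter_of_mem haD, insert_inter_of_mem haD, h₀]
        · rw [insert_inter_of_notMem haD, insert_inter_of_notMem haD, h₀]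
      simp only [F', hF k hk S (hS.trans hsub) T (hT.trans hsub) h₀,
        hF k hk _ (insert_subset_insert a hS) _ (insert_subset_insert a hT) h₁]
    have hcov' : ∀ i ∈ u, #{k ∈ K | i ∈ (D k).erase a} ≤ d := fun i hi =>
      (card_le_card (monotone_filter_right K fun _ _ => mem_of_mem_erase)).trans
        (hcov i (hsub hi))
    calc subsetExpect w₀ w₁ (insert a u) (fun S => ∏ k ∈ K, F k S)
        ≤ subsetExpect w₀ w₁ u (fun S => ∏ k ∈ K, F' k S) := by
          rw [subsetExpect_insert ha]; exact subsetExpect_mono hstep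
      _ ≤ ∏ k ∈ K, subsetExpect w₀ w₁ u (fun S => F' k S ^ d) ^ (d⁻¹ : ℝ) :=
          ih F' (fun k => (D k).erase a) hF' hcov'
      _ = ∏ k ∈ K, subsetExpect w₀ w₁ (insert a u) (fun S => F k S ^ d) ^ (d⁻¹ : ℝ) := by
          simp only [F', NNReal.rpow_inv_natCast_pow _ hd.ne', subsetExpect_insert ha]

end SubsetExpect

section Biased

variable {ι : Type*} [DecidableEq ι] (ν : ℝ≥0)

lemma inv_one_add_add_mul_inv_one_add : (1 + ν)⁻¹ + ν * (1 + ν)⁻¹ = 1 := by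
  rw [← one_add_mul, mul_inv_cancel₀ (by positivity)]

noncomputable abbrev biasedExpect (u : Finset ι) (f : Finset ι → ℝ≥0) : ℝ≥0 :=
  subsetExpect (fun _ => (1 + ν)⁻¹) (fun _ => ν * (1 + ν)⁻¹) u f

lemma one_add_pow_mul_biasedExpect (u : Finset ι) (f : Finset ι → ℝ≥0) :
    (1 + ν) ^ #u * biasedExpect ν u f = ∑ S ∈ u.powerset, ν ^ #S * f S := by
  rw [biasedExpect, subsetExpect, mul_sum]
  refine sum_congr rfl fun S hS => ?_
  have hsplit : (1 + ν) ^ #u = (1 + ν) ^ #S * (1 + ν) ^ (#u - #S) := by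
    rw [← pow_add, Nat.add_sub_cancel' (card_le_card (mem_powerset.1 hS))]
  rw [prod_const, prod_const, card_sdiff_of_subset (mem_powerset.1 hS), mul_pow, hsplit]
  simp only [inv_pow]
  field_simp

lemma biasedExpect_ite_disjoint_pow_le {u T : Finset ι} (hT : T ⊆ u) {d : ℕ} (hTd : #T = d) :
    biasedExpect ν u (fun S => (if Disjoint S T then 1 + ν else 1) ^ d) ≤ 2 := by
  have hw : ∀ _ : ι, (1 + ν)⁻¹ + ν * (1 + ν)⁻¹ = 1 := fun _ => inv_one_add_add_mul_inv_one_add ν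
  calc biasedExpect ν u (fun S => (if Disjoint S T then 1 + ν else 1) ^ d)
      ≤ biasedExpect ν u ((fun S => (1 + ν) ^ d * if Disjoint S T then 1 else 0) + fun _ => 1) :=
        subsetExpect_mono fun S _ => by simp only [Pi.add_apply]; split_ifs <;> simp
    _ = (1 + ν) ^ d * (1 + ν)⁻¹ ^ d + 1 := by
        rw [biasedExpect, subsetExpect_add, subsetExpect_const_mul,
          subsetExpect_indicator_disjoint hw hT, subsetExpect_const hw, prod_const, hTd]
    _ = 2 := by rw [← mul_pow, mul_inv_cancel₀ (by positivity), one_pow, one_add_one_eq_two]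

end Biased

theorem SimpleGraph.IsBipartiteWith.isIndepSet {V : Type*} {G : SimpleGraph V} {s t : Set V}
    (h : G.IsBipartiteWith s t) : G.IsIndepSet s :=
  fun _ hu _ hv _ hadj => Set.disjoint_left.1 h.disjoint hv (h.mem_of_mem_adj hu hadj)

theorem SimpleGraph.isBipartiteWith_compl_of_adj {V : Type*} [Fintype V] [DecidableEq V]
    {G : SimpleGraph V} {A : Finset V} (h : ∀ u v, G.Adj u v → (u ∈ A ↔ v ∉ A)) :
    G.IsBipartiteWith A (Aᶜ : Finset V) :=
  ⟨by simpa using disjoint_compl_right, fun u v huv => by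
    simp only [mem_coe, mem_compl]
    have := h u v huv
    tauto⟩

theorem SimpleGraph.IsRegularOfDegree.le_card_of_isBipartiteWith {V : Type*} [Fintype V]
    {G : SimpleGraph V} [DecidableRel G.Adj] {d : ℕ} (hreg : G.IsRegularOfDegree d)
    {s t : Finset V} (hbip : G.IsBipartiteWith s t) (hs : s.Nonempty) : d ≤ #t := by
  obtain ⟨v, hv⟩ := hs
  exact hreg.degree_eq v ▸ G.isBipartiteWith_degree_le hbip hv

variable {V : Type*} [Fintype V] [DecidableEq V] (G : SimpleGraph V) [DecidableRel G.Adj]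

noncomputable def indepPoly (ν : ℝ≥0) : ℝ≥0 :=
  ∑ I ∈ univ.powerset.filter (fun s : Finset V => ∀ u ∈ s, ∀ v ∈ s, ¬ G.Adj u v), ν ^ #I

lemma numIndep_mul_pow_le_indepPoly (t : ℕ) (ν : ℝ≥0) :
    numIndep G t * ν ^ t ≤ indepPoly G ν := by
  calc (numIndep G t : ℝ≥0) * ν ^ t
      = ∑ I ∈ univ.powerset.filter
          (fun s : Finset V => #s = t ∧ ∀ u ∈ s, ∀ v ∈ s, ¬ G.Adj u v), ν ^ #I := by
        rw [sum_congr rfl fun I hI => by rw [(mem_filter.1 hI).2.1], sum_const, nsmul_eq_mul,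
          numIndep]
    _ ≤ indepPoly G ν := sum_le_sum_of_subset (monotone_filter_right _ fun _ _ h => h.2)

lemma indepPoly_le_sum_powerset (A : Finset V) (ν : ℝ≥0) :
    indepPoly G ν ≤ ∑ S ∈ A.powerset,
      ν ^ #S * ∏ v ∈ Aᶜ, if Disjoint S (G.neighborFinset v) then 1 + ν else 1 := by
  set good : Finset V → Finset V := fun S => {v ∈ Aᶜ | Disjoint S (G.neighborFinset v)}
  have hprod : ∀ S : Finset V,
      (∏ v ∈ Aᶜ, if Disjoint S (G.neighborFinset v) then 1 + ν else 1) =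
        ∑ T ∈ (good S).powerset, ν ^ #T := fun S => by
    rw [prod_ite, prod_const, prod_const_one, mul_one, add_comm, ← sum_pow_mul_eq_add_pow]
    simp only [one_pow, mul_one, good]
  -- an independent set `I` splits as `I ∩ A` together with a set of vertices outside `A`
  -- having no neighbour in `I ∩ A`
  let split : Finset V → (_ : Finset V) × Finset V := fun I => ⟨I ∩ A, I \ A⟩
  calc indepPoly G ν
      = ∑ x ∈ (univ.powerset.filter
            (fun s : Finset V => ∀ u ∈ s, ∀ v ∈ s, ¬ G.Adj u v)).image split,
          ν ^ (#x.1 + #x.2) := by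
        rw [sum_image fun I _ J _ h => ?_]
        · simp only [split, card_inter_add_card_sdiff, indepPoly]
        · simp only [split, Sigma.mk.injEq, heq_eq_eq] at h
          rw [← sdiff_union_inter I A, ← sdiff_union_inter J A, h.1, h.2]
    _ ≤ ∑ x ∈ A.powerset.sigma fun S => (good S).powerset, ν ^ (#x.1 + #x.2) := by
        refine sum_le_sum_of_subset fun x hx => ?_
        obtain ⟨I, hI, rfl⟩ := mem_image.1 hx
        have hindep := (mem_filter.1 hI).2
        simp only [split, mem_sigma, mem_powerset, inter_subset_right, true_and, good]
        intro v hv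
        obtain ⟨hvI, hvA⟩ := mem_sdiff.1 hv
        refine mem_filter.2 ⟨mem_compl.2 hvA, disjoint_left.2 fun u hu hadj => ?_⟩
        exact hindep u (mem_inter.1 hu).1 v hvI ((G.mem_neighborFinset v u).1 hadj).symm
    _ = _ := by
        rw [sum_sigma]
        simp only [hprod, mul_sum, pow_add]

theorem indepPoly_le_of_isIndepSet_compl {d : ℕ} (hd : 0 < d) (hreg : G.IsRegularOfDegree d)
    {A : Finset V} (hA : G.IsIndepSet (Aᶜ : Finset V)) (ν : ℝ≥0) :
    indepPoly G ν ≤ (1 + ν) ^ #A * 2 ^ ((#Aᶜ : ℝ) / d) := by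
  set F : V → Finset V → ℝ≥0 := fun v S =>
    if Disjoint S (G.neighborFinset v) then 1 + ν else 1
  have hNA : ∀ v ∈ Aᶜ, G.neighborFinset v ⊆ A := fun v hv u hu => by
    rw [G.mem_neighborFinset] at hu
    by_contra huA
    exact hA (mem_coe.2 hv) (mem_coe.2 (mem_compl.2 huA)) (G.ne_of_adj hu) hu
  have hF : ∀ v ∈ Aᶜ, ∀ S ⊆ A, ∀ T ⊆ A,
      S ∩ G.neighborFinset v = T ∩ G.neighborFinset v → F v S = F v T := by
    intro v _ S _ T _ hST
    simp only [F, disjoint_iff_inter_eq_empty, hST]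
  have hcov : ∀ i ∈ A, #{v ∈ Aᶜ | i ∈ G.neighborFinset v} ≤ d := fun i _ => by
    refine (card_le_card fun v hv => ?_).trans (hreg i).le
    rw [mem_filter, G.mem_neighborFinset] at hv
    exact (G.mem_neighborFinset i v).2 hv.2.symm
  calc indepPoly G ν
      ≤ ∑ S ∈ A.powerset, ν ^ #S * ∏ v ∈ Aᶜ, F v S := indepPoly_le_sum_powerset G A ν
    _ = (1 + ν) ^ #A * biasedExpect ν A (fun S => ∏ v ∈ Aᶜ, F v S) :=
        (one_add_pow_mul_biasedExpect ν A _).symm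
    _ ≤ (1 + ν) ^ #A * ∏ v ∈ Aᶜ, biasedExpect ν A (fun S => F v S ^ d) ^ (d⁻¹ : ℝ) := by
        gcongr
        exact subsetExpect_prod_le_prod_rpow (fun _ => inv_one_add_add_mul_inv_one_add ν) hd A Aᶜ
          F (fun v => G.neighborFinset v) hF hcov
    _ ≤ (1 + ν) ^ #A * ∏ _v ∈ Aᶜ, (2 : ℝ≥0) ^ (d⁻¹ : ℝ) := by
        gcongr with v hv
        exact biasedExpect_ite_disjoint_pow_le ν (hNA v hv) (hreg v)
    _ = (1 + ν) ^ #A * 2 ^ ((#Aᶜ : ℝ) / d) := by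
        rw [prod_const, ← NNReal.rpow_mul_natCast, inv_mul_eq_div]

theorem choose_card_le_numIndep {A : Finset V} (hA : G.IsIndepSet (A : Set V)) (t : ℕ) :
    (#A).choose t ≤ numIndep G t := by
  rw [numIndep, ← card_powersetCard]
  refine card_le_card fun S hS => ?_
  obtain ⟨hSA, hSt⟩ := mem_powersetCard.1 hS
  refine mem_filter.2 ⟨mem_powerset.2 (subset_univ S), hSt, fun u hu v hv hadj => ?_⟩
  exact hA (hSA hu) (hSA hv) (G.ne_of_adj hadj) hadj

theorem numIndep_mul_pow_le {d : ℕ} (hd : 0 < d) (hreg : G.IsRegularOfDegree d) {A : Finset V}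
    (hA : G.IsIndepSet (Aᶜ : Finset V)) (t : ℕ) {x : ℝ} (hx : 0 ≤ x) :
    (numIndep G t : ℝ) * x ^ t ≤ (1 + x) ^ #A * 2 ^ ((#Aᶜ : ℝ) / d) := by
  have := NNReal.coe_le_coe.2 ((numIndep_mul_pow_le_indepPoly G t ⟨x, hx⟩).trans
    (indepPoly_le_of_isIndepSet_compl G hd hreg hA ⟨x, hx⟩))
  push_cast at this
  exact this

theorem numIndep_mul_pow_le_of_lt {n d : ℕ} (hd : 0 < d) (hreg : G.IsRegularOfDegree d)
    {A : Finset V} (hbip : G.IsBipartiteWith A (Aᶜ : Finset V)) (hA : #A = n) (hAc : #Aᶜ = n)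
    (k : ℕ) {t : ℕ} (ht : t < n) :
    (numIndep G k : ℝ) * (t / (n - t)) ^ k ≤
      (n + 1) * 2 ^ ((n : ℝ) / d) * numIndep G t * (t / (n - t)) ^ t := by
  have hx : (0 : ℝ) ≤ t / (n - t) := div_nonneg t.cast_nonneg (sub_pos.2 (by exact_mod_cast ht)).le
  have hchoose : (n.choose t : ℝ) ≤ numIndep G t := by
    rw [← hA]; exact_mod_cast choose_card_le_numIndep G hbip.isIndepSet t
  calc (numIndep G k : ℝ) * (t / (n - t)) ^ k ≤ (1 + t / (n - t)) ^ n * 2 ^ ((n : ℝ) / d) := by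
        simpa only [hA, hAc] using numIndep_mul_pow_le G hd hreg hbip.symm.isIndepSet k hx
    _ ≤ (n + 1) * n.choose t * (t / (n - t)) ^ t * 2 ^ ((n : ℝ) / d) := by
        gcongr; exact one_add_div_sub_pow_le ht
    _ = (n + 1) * 2 ^ ((n : ℝ) / d) * n.choose t * (t / (n - t)) ^ t := by ring
    _ ≤ (n + 1) * 2 ^ ((n : ℝ) / d) * numIndep G t * (t / (n - t)) ^ t := by gcongr

theorem card_eq_card_compl_of_isBipartiteWith {d : ℕ} (hd : 0 < d) (hreg : G.IsRegularOfDegree d)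
    {A : Finset V} (hbip : G.IsBipartiteWith A (Aᶜ : Finset V)) : #A = #Aᶜ := by
  have := G.isBipartiteWith_sum_degrees_eq hbip
  simp only [hreg.degree_eq, sum_const, smul_eq_mul] at this
  exact Nat.eq_of_mul_eq_mul_right hd this

theorem numIndep_le_numIndep_of_mul_le {n d : ℕ} (hd : 0 < d) (hreg : G.IsRegularOfDegree d)
    {A : Finset V} (hbip : G.IsBipartiteWith A (Aᶜ : Finset V)) (hA : #A = n) (hAc : #Aᶜ = n)
    {ρ : ℝ} (hρ : 1 < ρ) {i j : ℕ} (hij : i < j) (hj : ρ * j ≤ n - j)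
    (hs : 3 / Real.logb 2 ρ * max (Real.logb 2 n) ((n : ℝ) / d) ≤ (j : ℝ) - i) :
    numIndep G i ≤ numIndep G j := by
  have hjn : j < n := by
    have : (0 : ℝ) < ρ * j := mul_pos (by linarith) (by exact_mod_cast (Nat.zero_le i).trans_lt hij)
    exact_mod_cast (show (j : ℝ) < n by linarith)
  have hgap := succ_mul_two_rpow_le_pow hρ hd
    (hAc ▸ hreg.le_card_of_isBipartiteWith hbip (card_pos.1 (by omega))) (s := j - i)
    (by rwa [Nat.cast_sub hij.le])
  set x : ℝ := j / (n - j)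
  have hnj : (0 : ℝ) < n - j := sub_pos.2 (by exact_mod_cast hjn)
  have hx : 0 < x := div_pos (by exact_mod_cast (Nat.zero_le i).trans_lt hij) hnj
  have hρx : ρ * x ≤ 1 := by rw [mul_div_assoc', div_le_one hnj]; exact hj
  have hcmp := numIndep_mul_pow_le_of_lt G hd hreg hbip hA hAc i hjn
  suffices (numIndep G i : ℝ) * x ^ i ≤ numIndep G j * x ^ i by
    exact_mod_cast le_of_mul_le_mul_right this (pow_pos hx i)
  calc (numIndep G i : ℝ) * x ^ i ≤ (n + 1) * 2 ^ ((n : ℝ) / d) * numIndep G j * x ^ j := hcmp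
    _ ≤ ρ ^ (j - i) * numIndep G j * x ^ j := by gcongr
    _ = (ρ * x) ^ (j - i) * (numIndep G j * x ^ i) := by
        rw [mul_pow, ← pow_sub_mul_pow x hij.le]; ring
    _ ≤ numIndep G j * x ^ i :=
        mul_le_of_le_one_left (by positivity) (pow_le_one₀ (by positivity) hρx)

theorem numIndep_le_numIndep_of_le_mul {n d : ℕ} (hd : 0 < d) (hreg : G.IsRegularOfDegree d)
    {A : Finset V} (hbip : G.IsBipartiteWith A (Aᶜ : Finset V)) (hA : #A = n) (hAc : #Aᶜ = n)
    {ρ : ℝ} (hρ : 1 < ρ) {i j : ℕ} (hij : i < j) (hjn : j ≤ n) (hi : ρ * (n - i) ≤ i)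
    (hs : 3 / Real.logb 2 ρ * max (Real.logb 2 n) ((n : ℝ) / d) ≤ (j : ℝ) - i) :
    numIndep G j ≤ numIndep G i := by
  have hin : i < n := hij.trans_le hjn
  have hgap := succ_mul_two_rpow_le_pow hρ hd
    (hAc ▸ hreg.le_card_of_isBipartiteWith hbip (card_pos.1 (by omega))) (s := j - i)
    (by rwa [Nat.cast_sub hij.le])
  set x : ℝ := i / (n - i)
  have hni : (0 : ℝ) < n - i := sub_pos.2 (by exact_mod_cast hin)
  have hρx : ρ ≤ x := by rw [le_div_iff₀ hni]; exact hi
  have hcmp := numIndep_mul_pow_le_of_lt G hd hreg hbip hA hAc j hin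
  suffices (numIndep G j : ℝ) * x ^ j ≤ numIndep G i * x ^ j by
    exact_mod_cast le_of_mul_le_mul_right this (pow_pos ((zero_lt_one.trans hρ).trans_le hρx) j)
  calc (numIndep G j : ℝ) * x ^ j ≤ (n + 1) * 2 ^ ((n : ℝ) / d) * numIndep G i * x ^ i := hcmp
    _ ≤ ρ ^ (j - i) * numIndep G i * x ^ i := by gcongr
    _ ≤ x ^ (j - i) * numIndep G i * x ^ i := by gcongr
    _ = numIndep G i * x ^ j := by rw [← pow_sub_mul_pow x hij.le]; ring

theorem stmt_6 (ε : ℝ) (hε : 0 < ε) :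
    ∃ C : ℝ, 0 < C ∧
      ∀ (V : Type) (_ : Fintype V) (_ : DecidableEq V) (G : SimpleGraph V)
        (_ : DecidableRel G.Adj) (n d : ℕ) (A : Finset V),
        Fintype.card V = 2 * n → 0 < d → G.IsRegularOfDegree d →
        (∀ u v : V, G.Adj u v → (u ∈ A ↔ v ∉ A)) →
        (∀ i j : ℕ, i ≤ j → (j : ℝ) ≤ (1 - ε) * n / 2 →
            C * max (Real.logb 2 n) ((n : ℝ) / d) ≤ (j : ℝ) - (i : ℝ) →
            (numIndep G i : ℝ) ≤ numIndep G j) ∧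
        (∀ i j : ℕ, (1 + ε) * n / 2 ≤ (i : ℝ) → i ≤ j → j ≤ n →
            C * max (Real.logb 2 n) ((n : ℝ) / d) ≤ (j : ℝ) - (i : ℝ) →
            (numIndep G j : ℝ) ≤ numIndep G i) := by
  -- `ρ` needs `ε' < 1`, and shrinking `ε` only weakens the hypotheses
  set ε' := min ε (1 / 2)
  have hε' : 0 < ε' := lt_min hε one_half_pos
  have hε'ε : ε' ≤ ε := min_le_left _ _
  have hε'half : ε' ≤ 1 / 2 := min_le_right _ _
  set ρ := (1 + ε') / (1 - ε')
  have hρ : 1 < ρ := by rw [one_lt_div (by linarith)]; linarith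
  refine ⟨3 / Real.logb 2 ρ, div_pos three_pos (Real.logb_pos one_lt_two hρ), ?_⟩
  intro V _ _ G _ n d A hcard hd hreg hadj
  have hbip := G.isBipartiteWith_compl_of_adj hadj
  have hA : #A = n := by
    have := card_eq_card_compl_of_isBipartiteWith G hd hreg hbip
    rw [card_compl] at this; omega
  have hAc : #Aᶜ = n := by rw [card_compl]; omega
  refine ⟨fun i j hij hj hs => ?_, fun i j hi hij hjn hs => ?_⟩
  · rcases hij.eq_or_lt with rfl | hlt
    · exact le_rfl
    have hρj : ρ * j ≤ n - j := by
      rw [div_mul_eq_mul_div, div_le_iff₀ (by linarith)]; nlinarith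
    exact_mod_cast numIndep_le_numIndep_of_mul_le G hd hreg hbip hA hAc hρ hlt hρj hs
  · rcases hij.eq_or_lt with rfl | hlt
    · exact le_rfl
    have hρi : ρ * (n - i) ≤ i := by
      rw [div_mul_eq_mul_div, div_le_iff₀ (by linarith)]; nlinarith
    exact_mod_cast numIndep_le_numIndep_of_le_mul G hd hreg hbip hA hAc hρ hlt hjn hρi hs
end

section
/- Let Q_d be the hypercube on {0,1}^d, with bipartition classes E (even-weight strings) and O (odd-weight strings). For any independent set I of Q_d, at least one of |[I ∩ E]|, |[I ∩ O]| is at most 2^{d−2}, where [A] = {v : N({v}) ⊆ N(A)}. -/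
open Finset

/-- The discrete hypercube `Q_d`. -/
def cube (d : ℕ) : SimpleGraph (Fin d → Bool) where
  Adj x y := (Finset.univ.filter fun i => x i ≠ y i).card = 1
  symm := by
    constructor
    intro x y h
    simpa [ne_comm] using h
  loopless := by
    constructor
    intro x h
    simp at h

instance (d : ℕ) : DecidableRel (cube d).Adj := fun _ _ => by
  unfold cube
  infer_instance

/-- The external neighbourhood of a finite vertex set. -/
def extNbhd (d : ℕ) (A : Finset (Fin d → Bool)) : Finset (Fin d → Bool) :=
  Finset.univ.filter fun v => v ∉ A ∧ ∃ a ∈ A, (cube d).Adj v a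

/-- The closure `[A] = {v : N({v}) ⊆ N(A)}`. -/
def closed (d : ℕ) (A : Finset (Fin d → Bool)) : Finset (Fin d → Bool) :=
  Finset.univ.filter fun v => extNbhd d {v} ⊆ extNbhd d A

/-- A vertex of the hypercube has even weight. -/
def evenWt {d : ℕ} (x : Fin d → Bool) : Prop :=
  (Finset.univ.filter fun i => x i = true).card % 2 = 0

instance {d : ℕ} : DecidablePred (evenWt (d := d)) := fun _ => by
  unfold evenWt
  infer_instance

/-! For `d ≥ 1`, a vertex of `[A]` shares a neighbour with some vertex of `A`, so it has the
same parity: `[I ∩ E] ⊆ E` and `[I ∩ O] ⊆ O`. An edge `u w` with `u ∈ [A]`, `w ∈ [B]` would give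
`u ∈ N(B)`, so `u ~ b ∈ B`, and then `b ∈ N(A)`: an edge between `A` and `B`. Hence for independent
`I` flipping a fixed coordinate maps `[I ∩ O]` injectively into `E ∖ [I ∩ E]`, and
`|[I ∩ E]| + |[I ∩ O]| ≤ |E| = 2^(d-1)`. -/

section

variable {d : ℕ}

@[simp] lemma mem_extNbhd {A : Finset (Fin d → Bool)} {v : Fin d → Bool} :
    v ∈ extNbhd d A ↔ v ∉ A ∧ ∃ a ∈ A, (cube d).Adj v a := by
  simp [extNbhd]

@[simp] lemma mem_closed {A : Finset (Fin d → Bool)} {v : Fin d → Bool} :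
    v ∈ closed d A ↔ extNbhd d {v} ⊆ extNbhd d A := by
  simp [closed]

lemma mem_extNbhd_singleton {u v : Fin d → Bool} :
    v ∈ extNbhd d {u} ↔ (cube d).Adj v u := by
  simpa using fun h : (cube d).Adj v u => h.ne

def flipAt (j : Fin d) (x : Fin d → Bool) : Fin d → Bool :=
  Function.update x j (!x j)

lemma flipAt_involutive (j : Fin d) : Function.Involutive (flipAt j) := by
  intro x
  funext i
  by_cases h : i = j <;> simp [flipAt, Function.update, h]

lemma cube_adj_flipAt (j : Fin d) (x : Fin d → Bool) : (cube d).Adj x (flipAt j x) := by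
  change #(univ.filter fun i => x i ≠ flipAt j x i) = 1
  rw [card_eq_one]
  exact ⟨j, by ext i; by_cases h : i = j <;> simp [flipAt, Function.update, h]⟩

lemma exists_eq_flipAt_of_adj {x y : Fin d → Bool} (h : (cube d).Adj x y) :
    ∃ j, y = flipAt j x := by
  obtain ⟨j, hj⟩ := card_eq_one.1 h
  have hdiff : ∀ i, x i ≠ y i ↔ i = j := fun i => by simpa using congrArg (i ∈ ·) hj
  refine ⟨j, funext fun i => ?_⟩
  by_cases hij : i = j
  · subst hij
    have := (hdiff i).2 rfl
    cases hx : x i <;> cases hy : y i <;> simp_all [flipAt]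
  · simpa [flipAt, hij] using (not_not.1 (mt (hdiff i).1 hij)).symm

lemma evenWt_flipAt_iff (j : Fin d) (x : Fin d → Bool) : evenWt (flipAt j x) ↔ ¬ evenWt x := by
  unfold evenWt
  cases hx : x j
  · have : (univ.filter fun i => flipAt j x i = true) =
        insert j (univ.filter fun i => x i = true) := by
      ext i; by_cases h : i = j <;> simp [flipAt, Function.update, h, hx]
    rw [this, card_insert_of_notMem (by simp [hx])]
    omega
  · have : (univ.filter fun i => flipAt j x i = true) =
        (univ.filter fun i => x i = true).erase j := by
      ext i; by_cases h : i = j <;> simp [flipAt, Function.update, h, hx]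
    rw [← card_erase_add_one (show j ∈ univ.filter fun i => x i = true by simp [hx]), this]
    omega

lemma evenWt_iff_not_of_adj {x y : Fin d → Bool} (h : (cube d).Adj x y) :
    evenWt y ↔ ¬ evenWt x := by
  obtain ⟨j, rfl⟩ := exists_eq_flipAt_of_adj h
  exact evenWt_flipAt_iff j x

lemma two_mul_card_filter_evenWt (hd : 0 < d) :
    2 * #(univ.filter (evenWt (d := d))) = 2 ^ d := by
  let j : Fin d := ⟨0, hd⟩
  have hEO :
      #(univ.filter (evenWt (d := d))) = #(univ.filter fun x : Fin d → Bool => ¬ evenWt x) :=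
    card_nbij' (flipAt j) (flipAt j) (by intro x; simp [evenWt_flipAt_iff])
      (by intro x; simp [evenWt_flipAt_iff]) (fun x _ => flipAt_involutive j x)
      (fun x _ => flipAt_involutive j x)
  have hsum : #(univ.filter (evenWt (d := d))) +
      #(univ.filter fun x : Fin d → Bool => ¬ evenWt x) = 2 ^ d := by
    rw [card_filter_add_card_filter_not]
    simp
  omega

lemma exists_mem_evenWt_iff_of_mem_closed (hd : 0 < d) {A : Finset (Fin d → Bool)}
    {v : Fin d → Bool} (hv : v ∈ closed d A) : ∃ a ∈ A, (evenWt a ↔ evenWt v) := by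
  let j : Fin d := ⟨0, hd⟩
  have hvj : flipAt j v ∈ extNbhd d {v} := mem_extNbhd_singleton.2 (cube_adj_flipAt j v).symm
  obtain ⟨-, a, ha, hadj⟩ := mem_extNbhd.1 (mem_closed.1 hv hvj)
  refine ⟨a, ha, ?_⟩
  rw [evenWt_iff_not_of_adj hadj, evenWt_flipAt_iff, not_not]

lemma not_adj_of_mem_closed {A B : Finset (Fin d → Bool)}
    (hAB : ∀ a ∈ A, ∀ b ∈ B, ¬ (cube d).Adj a b) {u w : Fin d → Bool}
    (hu : u ∈ closed d A) (hw : w ∈ closed d B) : ¬ (cube d).Adj u w := by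
  intro huw
  obtain ⟨-, b, hb, hub⟩ := mem_extNbhd.1 (mem_closed.1 hw (mem_extNbhd_singleton.2 huw))
  obtain ⟨-, a, ha, hba⟩ := mem_extNbhd.1 (mem_closed.1 hu (mem_extNbhd_singleton.2 hub.symm))
  exact hAB a ha b hb hba.symm

lemma card_add_card_le_card_filter_evenWt (hd : 0 < d) {F G : Finset (Fin d → Bool)}
    (hF : ∀ v ∈ F, evenWt v) (hG : ∀ w ∈ G, ¬ evenWt w)
    (hFG : ∀ v ∈ F, ∀ w ∈ G, ¬ (cube d).Adj v w) :
    #F + #G ≤ #(univ.filter (evenWt (d := d))) := by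
  let j : Fin d := ⟨0, hd⟩
  have hdisj : Disjoint F (G.image (flipAt j)) := by
    simp only [disjoint_left, mem_image, not_exists, not_and]
    intro v hv w hw hwv
    exact hFG v hv w hw (hwv ▸ cube_adj_flipAt j w).symm
  calc #F + #G = #(F ∪ G.image (flipAt j)) := by
        rw [card_union_of_disjoint hdisj, card_image_of_injective G (flipAt_involutive j).injective]
    _ ≤ #(univ.filter (evenWt (d := d))) := by
        refine card_le_card fun v hv => ?_
        rcases mem_union.1 hv with hv | hv
        · simpa using hF v hv
        · obtain ⟨w, hw, rfl⟩ := mem_image.1 hv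
          simpa [evenWt_flipAt_iff] using hG w hw

end

theorem stmt_14_general (d : ℕ) (I : Finset (Fin d → Bool))
    (hI : ∀ u ∈ I, ∀ v ∈ I, ¬ (cube d).Adj u v) :
    (closed d (I.filter fun x => evenWt x)).card ≤ 2 ^ (d - 2) ∨
    (closed d (I.filter fun x => ¬ evenWt x)).card ≤ 2 ^ (d - 2) := by
  rcases Nat.eq_zero_or_pos d with rfl | hd
  · simp [card_le_one_of_subsingleton]
  set F := closed d (I.filter fun x => evenWt x)
  set G := closed d (I.filter fun x => ¬ evenWt x)
  have hF : ∀ v ∈ F, evenWt v := fun v hv => by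
    obtain ⟨a, ha, hav⟩ := exists_mem_evenWt_iff_of_mem_closed hd hv
    exact hav.1 (mem_filter.1 ha).2
  have hG : ∀ w ∈ G, ¬ evenWt w := fun w hw => by
    obtain ⟨a, ha, haw⟩ := exists_mem_evenWt_iff_of_mem_closed hd hw
    exact mt haw.2 (mem_filter.1 ha).2
  have hFG : ∀ v ∈ F, ∀ w ∈ G, ¬ (cube d).Adj v w :=
    fun v hv w hw => not_adj_of_mem_closed
      (fun a ha b hb => hI a (mem_filter.1 ha).1 b (mem_filter.1 hb).1) hv hw
  have hcard := card_add_card_le_card_filter_evenWt hd hF hG hFG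
  have hE := two_mul_card_filter_evenWt hd
  have hpow : 2 ^ d ≤ 4 * 2 ^ (d - 2) := by
    calc 2 ^ d ≤ 2 ^ (d - 2 + 2) := Nat.pow_le_pow_right two_pos (by omega)
      _ = 4 * 2 ^ (d - 2) := by rw [pow_add]; ring
  omega

theorem stmt_14 (d : ℕ) (hd : 2 ≤ d) (I : Finset (Fin d → Bool))
    (hI : ∀ u ∈ I, ∀ v ∈ I, ¬ (cube d).Adj u v) :
    (closed d (I.filter fun x => evenWt x)).card ≤ 2 ^ (d - 2) ∨
    (closed d (I.filter fun x => ¬ evenWt x)).card ≤ 2 ^ (d - 2) :=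
  stmt_14_general d I hI
end
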